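/- arXiv:1107.2713 — 3 statements merged into one kernel-verified Lean document; each statement's English description precedes it below -/
import Mathlib

section
/- For an N-polycone σ, the monoid σ^∨ ∩ M is a torsion-free, cancellative, finitely generated commutative monoid. -/
open scoped Classical

/-- `σ` is an `N`-polycone: the set of nonnegative real combinations of a
finite subset of the lattice `N`. -/
def IsPolycone {V : Type*} [AddCommGroup V] [Module ℝ V] (N : AddSubgroup V)
    (σ : Set V) : Prop :=
  ∃ s : Finset V, (↑s : Set V) ⊆ (N : Set V) ∧
    σ = {x | ∃ c : V → ℝ, (∀ v, 0 ≤ c v) ∧ x = ∑ v ∈ s, c v • v}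

/-- The dual cone `E^∨ = {u ∈ V* | u(E) ⊆ ℝ≥0}`. -/
def dualCone {V : Type*} [AddCommGroup V] [Module ℝ V] (E : Set V) :
    Set (Module.Dual ℝ V) :=
  {u | ∀ x ∈ E, 0 ≤ u x}

/-- The dual lattice `M = N*`: functionals taking integer values on `N`. -/
def dualLattice {V : Type*} [AddCommGroup V] [Module ℝ V] (N : AddSubgroup V) :
    Set (Module.Dual ℝ V) :=
  {u | ∀ x ∈ N, ∃ k : ℤ, u x = (k : ℝ)}

/-- `τ` is a face of `σ`: `τ = σ ∩ ker u` for some `u ∈ σ^∨ ∩ M`. -/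
def IsFace {V : Type*} [AddCommGroup V] [Module ℝ V] (N : AddSubgroup V)
    (σ τ : Set V) : Prop :=
  ∃ u ∈ dualCone σ ∩ dualLattice N, τ = σ ∩ {x | u x = 0}

/-- `σ` is sharp: it contains no line. -/
def Sharp {V : Type*} [AddCommGroup V] [Module ℝ V] (σ : Set V) : Prop :=
  ∀ x ∈ σ, -x ∈ σ → x = 0

/-- `N` is a ℤ-structure on `V`: a full-rank lattice. -/
def IsZStructure {V : Type*} [AddCommGroup V] [Module ℝ V] (N : AddSubgroup V) : Prop :=
  Submodule.span ℝ (N : Set V) = ⊤ ∧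
    Nonempty (Module.Basis (Fin (Module.finrank ℝ V)) ℤ N)

/-- An `N`-fan: a finite set of sharp `N`-polycones closed under faces, such
that the intersection of two cones is a common face of both. -/
def IsFan {V : Type*} [AddCommGroup V] [Module ℝ V] (N : AddSubgroup V)
    (F : Set (Set V)) : Prop :=
  F.Finite ∧ (∀ σ ∈ F, IsPolycone N σ ∧ Sharp σ) ∧
    (∀ σ ∈ F, ∀ τ, IsFace N σ τ → τ ∈ F) ∧
    (∀ σ ∈ F, ∀ τ ∈ F, IsFace N σ (σ ∩ τ) ∧ IsFace N τ (σ ∩ τ))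

/-- `ρ` is one-dimensional. -/
def IsRay {V : Type*} [AddCommGroup V] [Module ℝ V] (ρ : Set V) : Prop :=
  Module.finrank ℝ (Submodule.span ℝ ρ) = 1

/-- `x` is the minimal `N`-generator of the ray `ρ`. -/
def IsMinGen {V : Type*} [AddCommGroup V] [Module ℝ V] (N : AddSubgroup V)
    (ρ : Set V) (x : V) : Prop :=
  x ∈ N ∧ ρ = {y | ∃ r : ℝ, 0 ≤ r ∧ y = r • x} ∧
    ∀ r : ℝ, 0 < r → r < 1 → r • x ∉ N


/-!
A ℤ-basis of `N` is also an ℝ-basis of `V`, so extending functionals identifies `M` with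
`Hom(N, ℤ) ≅ ℤⁿ`, and `σ^∨ ∩ M` with the integer solutions of the finitely many integral
inequalities `φ(v) ≥ 0`, `v` running over the generators of `σ`. That monoid is finitely generated
by Gordan's lemma: writing `m = m⁺ - m⁻` and adding slack variables, it is the image of the
monoid of solutions in `ℕᵏ` of a system of linear equations, which is finitely generated since
`ℕᵏ` is well-quasi-ordered (Dickson). Torsion-freeness and cancellativity are inherited from the
vector space `V*`.
-/

open AddMonoidHom in
theorem AddSubmonoid.fg_comap_nonneg_of_pi {ι κ : Type*} [Finite ι] [Finite κ]
    (L : (ι → ℤ) →+ (κ → ℤ)) : ((AddSubmonoid.nonneg (κ → ℤ)).comap L).FG := by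
  let slack : (κ → ℕ) × (ι → ℕ) × (ι → ℕ) →+ (κ → ℤ) :=
    ((Nat.castAddMonoidHom ℤ).compLeft κ).comp (fst _ _)
  let pos : (κ → ℕ) × (ι → ℕ) × (ι → ℕ) →+ (ι → ℤ) :=
    ((Nat.castAddMonoidHom ℤ).compLeft ι).comp ((fst _ _).comp (snd _ _))
  let neg : (κ → ℕ) × (ι → ℕ) × (ι → ℕ) →+ (ι → ℤ) :=
    ((Nat.castAddMonoidHom ℤ).compLeft ι).comp ((snd _ _).comp (snd _ _))
  convert (fg_eqLocusM (slack + L.comp neg) (L.comp pos)).map (pos - neg)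
  ext m
  simp only [mem_comap, mem_nonneg, mem_map, mem_eqLocusM, AddMonoidHom.add_apply,
    AddMonoidHom.sub_apply, comp_apply]
  constructor
  · intro hm
    let x := (fun j => (L m j).toNat, fun i => (m i).toNat, fun i => (-m i).toNat)
    have hslack : slack x = L m := funext fun j => Int.toNat_of_nonneg (hm j)
    have hsplit : pos x - neg x = m := funext fun i => by simp [x, pos, neg]
    refine ⟨x, ?_, hsplit⟩
    rw [hslack, ← hsplit, map_sub, sub_add_cancel]
  · rintro ⟨x, hx, rfl⟩
    rw [map_sub, ← hx, add_sub_cancel_right]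
    exact fun j => Int.natCast_nonneg _

theorem AddSubmonoid.fg_comap_nonneg {A κ : Type*} [AddCommGroup A] [Module.Finite ℤ A]
    [Finite κ] (L : A →+ (κ → ℤ)) : ((AddSubmonoid.nonneg (κ → ℤ)).comap L).FG := by
  obtain ⟨n, π, hπ⟩ := Module.Finite.exists_fin' ℤ A
  rw [← AddSubmonoid.map_comap_eq_of_surjective (f := π.toAddMonoidHom) hπ (.comap L _)]
  exact (fg_comap_nonneg_of_pi (L.comp π.toAddMonoidHom)).map _

instance AddSubmonoid.isAddTorsionFree {M : Type*} [AddMonoid M] [IsAddTorsionFree M]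
    (P : AddSubmonoid M) : IsAddTorsionFree P :=
  Subtype.coe_injective.isAddTorsionFree P.subtype

instance {V : Type*} [AddCommGroup V] [Module ℝ V] : IsAddTorsionFree (Module.Dual ℝ V) :=
  .of_isTorsionFree ℝ _

theorem mem_dualCone_setOf_sum_smul_iff {V : Type*} [AddCommGroup V] [Module ℝ V]
    {s : Finset V} {u : Module.Dual ℝ V} :
    u ∈ dualCone {x | ∃ c : V → ℝ, (∀ v, 0 ≤ c v) ∧ x = ∑ v ∈ s, c v • v} ↔
      ∀ v ∈ s, 0 ≤ u v := by
  refine ⟨fun hu v hv => hu v ⟨fun w => if w = v then 1 else 0, ?_, ?_⟩, ?_⟩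
  · intro w
    dsimp only
    split_ifs <;> norm_num
  · simp [ite_smul, hv]
  · rintro hs _ ⟨c, hc, rfl⟩
    rw [map_sum]
    exact Finset.sum_nonneg fun v hv => by rw [map_smul]; exact mul_nonneg (hc v) (hs v hv)

section Lattice

variable {V : Type*} [AddCommGroup V] [Module ℝ V] {N : AddSubgroup V}

theorem IsZStructure.exists_basis (hN : IsZStructure N) :
    ∃ (b : Module.Basis (Fin (Module.finrank ℝ V)) ℤ N)
      (B : Module.Basis (Fin (Module.finrank ℝ V)) ℝ V), ∀ i, (b i : V) = B i := by
  obtain ⟨hspan, ⟨b⟩⟩ := hN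
  have htop : ⊤ ≤ Submodule.span ℝ (Set.range fun i => (b i : V)) := by
    rw [← hspan, Submodule.span_le]
    intro x hx
    have hx_eq : ∑ i, b.repr ⟨x, hx⟩ i • (b i : V) = x := by
      have := congrArg Subtype.val (b.sum_repr ⟨x, hx⟩)
      push_cast at this
      exact this
    rw [← hx_eq]
    exact Submodule.sum_mem _ fun i _ => zsmul_mem (Submodule.subset_span (Set.mem_range_self i)) _
  exact ⟨b, basisOfTopLeSpanOfCardEqFinrank _ htop (Fintype.card_fin _), fun i => by simp⟩

variable {ι : Type*} (b : Module.Basis ι ℤ N) (B : Module.Basis ι ℝ V)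

noncomputable def dualExtend : Module.Dual ℤ N →+ Module.Dual ℝ V where
  toFun φ := B.constr ℝ fun i => (φ (b i) : ℝ)
  map_zero' := B.ext fun i => by simp
  map_add' φ ψ := B.ext fun i => by simp

variable {b B}

theorem dualExtend_apply_of_mem (hbB : ∀ i, (b i : V) = B i) (φ : Module.Dual ℤ N) {x : V}
    (hx : x ∈ N) : dualExtend b B φ x = φ ⟨x, hx⟩ := by
  have h : ((dualExtend b B φ).restrictScalars ℤ).comp N.toIntSubmodule.subtype =
      (Int.castAddHom ℝ).toIntLinearMap.comp φ :=
    b.ext fun i => show dualExtend b B φ (b i) = φ (b i) by simp [dualExtend, hbB]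
  exact LinearMap.congr_fun h ⟨x, hx⟩

theorem mem_dualLattice_iff_exists_dualExtend (hbB : ∀ i, (b i : V) = B i)
    {u : Module.Dual ℝ V} : u ∈ dualLattice N ↔ ∃ φ, dualExtend b B φ = u := by
  constructor
  · intro hu
    choose k hk using fun i => hu (b i) (b i).2
    refine ⟨b.constr ℤ k, B.ext fun i => ?_⟩
    simp [dualExtend, ← hk, hbB]
  · rintro ⟨φ, rfl⟩ x hx
    exact ⟨φ ⟨x, hx⟩, dualExtend_apply_of_mem hbB φ hx⟩

variable {s : Finset V} (hsN : (s : Set V) ⊆ N)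

def dualEvalOn : Module.Dual ℤ N →+ (s → ℤ) :=
  AddMonoidHom.mk' (fun φ v => φ ⟨v, hsN v.2⟩) fun _ _ => rfl

variable {hsN}

theorem dualCone_inter_dualLattice_eq (hbB : ∀ i, (b i : V) = B i) :
    dualCone {x | ∃ c : V → ℝ, (∀ v, 0 ≤ c v) ∧ x = ∑ v ∈ s, c v • v} ∩ dualLattice N =
      ((AddSubmonoid.nonneg (s → ℤ)).comap (dualEvalOn hsN)).map (dualExtend b B) := by
  have hnonneg : ∀ φ, 0 ≤ dualEvalOn hsN φ ↔ ∀ v ∈ s, 0 ≤ dualExtend b B φ v := fun φ => by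
    simp only [Pi.le_def, Pi.zero_apply, Subtype.forall]
    refine forall₂_congr fun v hv => ?_
    rw [dualExtend_apply_of_mem hbB φ (Set.mem_of_subset_of_mem hsN hv), Int.cast_nonneg_iff]
    rfl
  ext u
  rw [Set.mem_inter_iff, mem_dualCone_setOf_sum_smul_iff,
    mem_dualLattice_iff_exists_dualExtend hbB]
  simp only [AddSubmonoid.coe_map, Set.mem_image, SetLike.mem_coe, AddSubmonoid.mem_comap,
    AddSubmonoid.mem_nonneg]
  constructor
  · rintro ⟨hu, φ, rfl⟩
    exact ⟨φ, (hnonneg φ).2 hu, rfl⟩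
  · rintro ⟨φ, hφ, rfl⟩
    exact ⟨(hnonneg φ).1 hφ, φ, rfl⟩

end Lattice

theorem dual_monoid_props_general {V : Type*} [AddCommGroup V] [Module ℝ V]
    (N : AddSubgroup V) (hN : IsZStructure N)
    (σ : Set V) (hσ : IsPolycone N σ) :
    ∃ P : AddSubmonoid (Module.Dual ℝ V),
      (P : Set (Module.Dual ℝ V)) = dualCone σ ∩ dualLattice N ∧
      P.FG ∧
      (∀ (n : ℕ) (x y : P), 0 < n → n • x = n • y → x = y) ∧
      (∀ a b c : P, a + b = a + c → b = c) := by
  obtain ⟨b, B, hbB⟩ := hN.exists_basis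
  obtain ⟨s, hsN, rfl⟩ := hσ
  have : Module.Finite ℤ N := .of_basis b
  have : Module.Free ℤ N := .of_basis b
  exact ⟨_, (dualCone_inter_dualLattice_eq hbB).symm,
    (AddSubmonoid.fg_comap_nonneg (dualEvalOn hsN)).map _,
    fun n x y hn h => nsmul_right_injective hn.ne' h, fun a b c h => add_left_cancel h⟩

/-- `σ^∨ ∩ M` is a torsion-free, cancellative, finitely generated
commutative monoid. -/
theorem dual_monoid_props {V : Type*} [AddCommGroup V] [Module ℝ V]
    [FiniteDimensional ℝ V] (N : AddSubgroup V) (hN : IsZStructure N)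
    (σ : Set V) (hσ : IsPolycone N σ) :
    ∃ P : AddSubmonoid (Module.Dual ℝ V),
      (P : Set (Module.Dual ℝ V)) = dualCone σ ∩ dualLattice N ∧
      P.FG ∧
      (∀ (n : ℕ) (x y : P), 0 < n → n • x = n • y → x = y) ∧
      (∀ a b c : P, a + b = a + c → b = c) :=
  dual_monoid_props_general N hN σ hσ
end

section
/- Let R be a commutative ring and P a commutative cancellative torsion-free monoid. The monoid algebra R[P] is reduced if and only if R is reduced. -/
/-!
A cancellative torsion-free commutative monoid `P` embeds into its Grothendieck group, which is
again torsion-free and therefore embeds into the `ℚ`-vector space `ℚ ⊗[ℤ] G`. Hence `P` has unique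
sums, so `(R ⧸ 𝔭)[P]` is a domain for every prime `𝔭` of `R`. A nilpotent element of `R[P]` thus has
all its coefficients in every prime of `R`, i.e. in the nilradical, which vanishes when `R` is
reduced.
-/

instance (priority := low) AddCommGroup.twoUniqueSums_of_isAddTorsionFree {G : Type*}
    [AddCommGroup G] [IsAddTorsionFree G] : TwoUniqueSums G :=
  have hinj : Function.Injective (TensorProduct.mk ℤ ℚ G 1) :=
    (IsLocalizedModule.injective_iff_isRegular (nonZeroDivisors ℤ) _).mpr fun c ↦
      smul_right_injective G (nonZeroDivisors.coe_ne_zero c)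
  .of_injective_addHom (TensorProduct.mk ℤ ℚ G 1).toAddMonoidHom.toAddHom hinj inferInstance

instance (priority := low) AddCommMonoid.twoUniqueSums_of_isAddTorsionFree {M : Type*}
    [AddCommMonoid M] [IsCancelAdd M] [IsAddTorsionFree M] : TwoUniqueSums M :=
  .of_injective_addHom (Algebra.GrothendieckAddGroup.of (M := M)).toAddHom
    (AddLocalization.mk_left_injective 0) inferInstance

namespace AddMonoidAlgebra

variable {R P : Type*} [CommRing R] [AddMonoid P]

theorem injective_pi_mapRingHom_quotient [IsReduced R] :
    Function.Injective
      (RingHom.pi fun p : PrimeSpectrum R ↦ mapRingHom P (Ideal.Quotient.mk p.asIdeal)) := by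
  refine (injective_iff_map_eq_zero _).mpr fun x hx ↦ ?_
  ext d
  have hmem : x.coeff d ∈ nilradical R := by
    rw [PrimeSpectrum.nilradical_eq_iInf, Submodule.mem_iInf]
    intro p
    have hp : mapRingHom P (Ideal.Quotient.mk p.asIdeal) x = 0 := congr_fun hx p
    rw [← Ideal.Quotient.eq_zero_iff_mem, ← coeff_mapRingHom, hp, coeff_zero, Finsupp.coe_zero,
      Pi.zero_apply]
  simpa [nilradical_eq_zero] using hmem

theorem isReduced_of_uniqueSums [IsReduced R] [UniqueSums P] : IsReduced (AddMonoidAlgebra R P) :=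
  isReduced_of_injective _ injective_pi_mapRingHom_quotient

end AddMonoidAlgebra

/-- for a cancellative torsion-free commutative monoid `P`,
the monoid algebra `R[P]` is reduced iff `R` is reduced. -/
theorem monoidAlgebra_isReduced_iff (R : Type*) [CommRing R]
    (P : Type*) [AddCommMonoid P] [IsCancelAdd P]
    (htf : ∀ (n : ℕ) (x y : P), 0 < n → n • x = n • y → x = y) :
    IsReduced (AddMonoidAlgebra R P) ↔ IsReduced R := by
  refine ⟨fun _ ↦ isReduced_of_injective (AddMonoidAlgebra.singleZeroRingHom (M := P))
    AddMonoidAlgebra.single_right_injective, fun _ ↦ ?_⟩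
  have : IsAddTorsionFree P := ⟨fun n hn x y hxy ↦ htf n x y (Nat.pos_of_ne_zero hn) hxy⟩
  exact AddMonoidAlgebra.isReduced_of_uniqueSums
end

section
/- Let S = R[(Z_ρ)_{ρ∈Σ₁}] be the polynomial ring over a commutative ring R graded by A = coker(c) via deg(Z_ρ) = α_ρ, and let I be the ideal generated by the monomials Ẑ_σ = ∏_{ρ∈Σ₁∖σ₁} Z_ρ for σ ∈ Σ. For a subgroup B ⊆ A of finite index, the ideal I_B = I ∩ S_B of the degree-restricted subring S_B = ⊕_{α∈B} S_α is generated by finitely many monomials. -/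
open scoped Classical

open scoped Classical

/-- The `A`-degree of a monomial exponent `d`, for the grading with
`deg Z_ρ = α ρ`. -/
noncomputable def monDeg {ι A : Type*} [AddCommGroup A] (α : ι → A)
    (d : ι →₀ ℕ) : A :=
  d.sum fun ρ k => k • α ρ

theorem monDeg_add {ι A : Type*} [AddCommGroup A] (α : ι → A) (d e : ι →₀ ℕ) :
    monDeg α (d + e) = monDeg α d + monDeg α e := by
  classical
  exact Finsupp.sum_add_index' (fun ρ => zero_smul ℕ (α ρ))
    (fun ρ k l => add_smul k l (α ρ))

/-- The `B`-restricted Cox ring `S_B = ⊕_{α ∈ B} S_α` as a subalgebra of the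
polynomial ring `S = R[(Z_ρ)_ρ]`. -/
noncomputable def SB (R : Type*) [CommRing R] {ι A : Type*} [AddCommGroup A]
    (α : ι → A) (B : AddSubgroup A) : Subalgebra R (MvPolynomial ι R) where
  carrier := {p | ∀ d ∈ p.support, monDeg α d ∈ B}
  add_mem' := by
    intro p q hp hq d hd
    rcases Finset.mem_union.1 (MvPolynomial.support_add hd) with h | h
    · exact hp d h
    · exact hq d h
  mul_mem' := by
    intro p q hp hq d hd
    obtain ⟨a, ha, b, hb, rfl⟩ := Finset.mem_add.1 (MvPolynomial.support_mul p q hd)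
    rw [monDeg_add]
    exact B.add_mem (hp a ha) (hq b hb)
  zero_mem' := by
    intro d hd
    simp at hd
  one_mem' := by
    intro r hd
    have h := MvPolynomial.mem_support_iff.1 hd
    rw [MvPolynomial.coeff_one] at h
    by_cases h0 : r = 0
    · subst h0
      simpa [monDeg] using B.zero_mem
    · simp [eq_comm, h0] at h
  algebraMap_mem' := by
    intro r d hd
    have h := MvPolynomial.mem_support_iff.1 hd
    rw [MvPolynomial.algebraMap_eq, MvPolynomial.coeff_C] at h
    by_cases h0 : d = 0
    · subst h0
      simpa [monDeg] using B.zero_mem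
    · simp [eq_comm, h0] at h

/-- The dual lattice as an additive subgroup of `V*`. -/
def dualLatticeSub {V : Type*} [AddCommGroup V] [Module ℝ V]
    (N : AddSubgroup V) : AddSubgroup (Module.Dual ℝ V) where
  carrier := dualLattice N
  zero_mem' := fun x _ => ⟨0, by simp⟩
  add_mem' := by
    rintro u v hu hv x hx
    obtain ⟨k, hk⟩ := hu x hx
    obtain ⟨l, hl⟩ := hv x hx
    exact ⟨k + l, by push_cast; simp [hk, hl]⟩
  neg_mem' := by
    rintro u hu x hx
    obtain ⟨k, hk⟩ := hu x hx
    exact ⟨-k, by push_cast; simp [hk]⟩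

/-- The exponent vector of the monomial `Ẑ_σ = ∏_{ρ ∈ Σ₁ ∖ σ₁} Z_ρ`, where the
rays of the fan are enumerated by `r : ι → Set V`. -/
noncomputable def zhat {V : Type*} [AddCommGroup V] [Module ℝ V]
    (N : AddSubgroup V) {ι : Type*} [Fintype ι] (r : ι → Set V)
    (σ : Set V) : ι →₀ ℕ :=
  Finsupp.equivFunOnFinite.symm (fun ρ => if IsFace N σ (r ρ) then 0 else 1)

/-!
`I` is a monomial ideal and `S_B` is spanned by the monomials it contains, so `I_B` is spanned by
the monomials `Z^d` with `deg d ∈ B` and `d ≥ zhat σ` for some `σ ∈ Σ`. By Dickson's lemma the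
minimal such exponents `m` are finitely many, and every such `d` is `m + (d - m)` with `m` minimal,
where `deg (d - m) = deg d - deg m ∈ B`; hence `Z^d = Z^(d - m) Z^m` with both factors in `S_B`.
-/

open MvPolynomial

theorem exists_finite_subset_forall_exists_le {P : Type*} [PartialOrder P] [WellQuasiOrderedLE P]
    (E : Set P) : ∃ M ⊆ E, M.Finite ∧ ∀ d ∈ E, ∃ m ∈ M, m ≤ d := by
  have hE : E.IsPWO := Set.isPWO_of_wellQuasiOrderedLE E
  refine ⟨{d | Minimal (· ∈ E) d}, setOfPred_minimal_subset _,
    (setOfPred_minimal_antichain (· ∈ E)).finite_of_partiallyWellOrderedOn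
      (hE.mono (setOfPred_minimal_subset _)), fun d hd => ?_⟩
  obtain ⟨m, hmd, hm⟩ := hE.exists_le_minimal hd
  exact ⟨m, hm, hmd⟩

section SB

variable {R : Type*} [CommRing R] {ι A : Type*} [AddCommGroup A] {α : ι → A}
  {B : AddSubgroup A}

theorem monomial_mem_SB {d : ι →₀ ℕ} (c : R) (h : monDeg α d ∈ B) :
    monomial d c ∈ SB R α B := by
  intro e he
  rwa [Finset.mem_singleton.1 (support_monomial_subset he)]

theorem monDeg_tsub_mem {m d : ι →₀ ℕ} (hmd : m ≤ d) (hm : monDeg α m ∈ B)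
    (hd : monDeg α d ∈ B) : monDeg α (d - m) ∈ B := by
  have h := monDeg_add α (d - m) m
  rw [tsub_add_cancel_of_le hmd] at h
  rw [eq_sub_of_add_eq h.symm]
  exact B.sub_mem hd hm

theorem SB.eq_sum_monomial (x : SB R α B) :
    x = ∑ d ∈ (x : MvPolynomial ι R).support.attach,
      (⟨monomial d (coeff d (x : MvPolynomial ι R)), monomial_mem_SB _ (x.2 d d.2)⟩ :
        SB R α B) := by
  apply Subtype.ext
  rw [AddSubmonoidClass.coe_finsetSum,
    Finset.sum_attach _ fun d => monomial d (coeff d (x : MvPolynomial ι R))]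
  exact (support_sum_monomial_coeff _).symm

theorem SB.monomial_mem_of_le {I : Ideal (SB R α B)} {g : SB R α B} {m d : ι →₀ ℕ}
    (hgI : g ∈ I) (hg : (g : MvPolynomial ι R) = monomial m 1) (hm : monDeg α m ∈ B)
    (hmd : m ≤ d) (c : R) (hd : monDeg α d ∈ B) :
    (⟨monomial d c, monomial_mem_SB c hd⟩ : SB R α B) ∈ I := by
  have hfac : (⟨monomial d c, monomial_mem_SB c hd⟩ : SB R α B) =
      ⟨monomial (d - m) c, monomial_mem_SB c (monDeg_tsub_mem hmd hm hd)⟩ * g := by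
    apply Subtype.ext
    rw [MulMemClass.coe_mul, hg, monomial_mul, mul_one, tsub_add_cancel_of_le hmd]
  rw [hfac]
  exact I.mul_mem_left _ hgI

theorem SB.exists_finset_monomial_span_eq_comap [Finite ι] (D : Set (ι →₀ ℕ)) :
    ∃ G : Finset (SB R α B),
      (∀ g ∈ G, ∃ d : ι →₀ ℕ, (g : MvPolynomial ι R) = monomial d 1) ∧
      Ideal.span (G : Set (SB R α B)) =
        Ideal.comap (SB R α B).val (Ideal.span ((fun d => monomial d (1 : R)) '' D)) := by
  obtain ⟨M, hME, hM, hcover⟩ :=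
    exists_finite_subset_forall_exists_le {d | monDeg α d ∈ B ∧ ∃ e ∈ D, e ≤ d}
  have hG : (Subtype.val ⁻¹' ((fun d => monomial d (1 : R)) '' M) : Set (SB R α B)).Finite :=
    (hM.image _).preimage Subtype.val_injective.injOn
  refine ⟨hG.toFinset, fun g hg => ?_, le_antisymm ?_ fun x hx => ?_⟩
  · obtain ⟨d, -, hd⟩ := hG.mem_toFinset.1 hg
    exact ⟨d, hd.symm⟩
  · rw [Ideal.span_le]
    intro g hg
    obtain ⟨m, hm, hgm⟩ := hG.mem_toFinset.1 hg
    obtain ⟨-, e, he, hem⟩ := hME hm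
    rw [SetLike.mem_coe, Ideal.mem_comap, Subalgebra.coe_val, ← hgm,
      mem_ideal_span_monomial_image]
    intro d hd
    rw [Finset.mem_singleton.1 (support_monomial_subset hd)]
    exact ⟨e, he, hem⟩
  · rw [SB.eq_sum_monomial x]
    refine Ideal.sum_mem _ fun d _ => ?_
    obtain ⟨e, he, hed⟩ := mem_ideal_span_monomial_image.1 hx d d.2
    obtain ⟨m, hm, hmd⟩ := hcover d ⟨x.2 d d.2, e, he, hed⟩
    have hmB : monDeg α m ∈ B := (hME hm).1
    exact SB.monomial_mem_of_le (g := ⟨monomial m 1, monomial_mem_SB 1 hmB⟩)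
      (Ideal.subset_span (hG.mem_toFinset.2 ⟨m, hm, rfl⟩)) rfl hmB hmd _ (x.2 d d.2)

end SB

theorem IB_fg_by_monomials_general {V : Type*} [AddCommGroup V] [Module ℝ V]
    (N : AddSubgroup V)
    (F : Set (Set V))
    {ι : Type*} [Fintype ι] (r : ι → Set V)
    {A : Type*} [AddCommGroup A] (a : (ι → ℤ) →+ A)
    (B : AddSubgroup A)
    (R : Type*) [CommRing R] :
    ∃ G : Finset (SB R (fun ρ => a (Pi.single ρ 1)) B),
      (∀ g ∈ G, ∃ d : ι →₀ ℕ, (g : MvPolynomial ι R) = MvPolynomial.monomial d 1) ∧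
      Ideal.span (G : Set (SB R (fun ρ => a (Pi.single ρ 1)) B)) =
        Ideal.comap (SB R (fun ρ => a (Pi.single ρ 1)) B).val
          (Ideal.span {p : MvPolynomial ι R |
            ∃ σ ∈ F, p = MvPolynomial.monomial (zhat N r σ) (1 : R)}) := by
  have hI : {p : MvPolynomial ι R | ∃ σ ∈ F, p = monomial (zhat N r σ) (1 : R)} =
      (fun d => monomial d (1 : R)) '' (zhat N r '' F) := by
    rw [Set.image_image]
    ext
    simp [eq_comm]
  rw [hI]
  exact SB.exists_finset_monomial_span_eq_comap _

/-- for a finite-index subgroup `B ⊆ A = coker c`, the ideal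
`I_B = I ∩ S_B` of the `B`-restricted Cox ring `S_B` is generated by finitely
many monomials, where `I = ⟨Ẑ_σ ∣ σ ∈ Σ⟩`. -/
theorem IB_fg_by_monomials {V : Type*} [AddCommGroup V] [Module ℝ V]
    [FiniteDimensional ℝ V] (N : AddSubgroup V) (hN : IsZStructure N)
    (F : Set (Set V)) (hF : IsFan N F)
    {ι : Type*} [Fintype ι] (r : ι → Set V) (hrinj : Function.Injective r)
    (hray : ∀ ρ, r ρ ∈ F ∧ IsRay (r ρ))
    (hsurj : ∀ ρ' ∈ F, IsRay ρ' → ∃ ρ, r ρ = ρ')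
    (gen : Set V → V) (hgen : ∀ ρ ∈ F, IsRay ρ → IsMinGen N ρ (gen ρ))
    (c : dualLatticeSub N →+ (ι → ℤ))
    (hc : ∀ (u : dualLatticeSub N) (ρ : ι),
      ((c u ρ : ℤ) : ℝ) = (u : Module.Dual ℝ V) (gen (r ρ)))
    {A : Type*} [AddCommGroup A] (a : (ι → ℤ) →+ A)
    (ha : Function.Surjective a) (hker : a.ker = c.range)
    (B : AddSubgroup A) (hB : B.index ≠ 0)
    (R : Type*) [CommRing R] :
    ∃ G : Finset (SB R (fun ρ => a (Pi.single ρ 1)) B),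
      (∀ g ∈ G, ∃ d : ι →₀ ℕ, (g : MvPolynomial ι R) = MvPolynomial.monomial d 1) ∧
      Ideal.span (G : Set (SB R (fun ρ => a (Pi.single ρ 1)) B)) =
        Ideal.comap (SB R (fun ρ => a (Pi.single ρ 1)) B).val
          (Ideal.span {p : MvPolynomial ι R |
            ∃ σ ∈ F, p = MvPolynomial.monomial (zhat N r σ) (1 : R)}) :=
  IB_fg_by_monomials_general N F r a B R
end
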